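/- arXiv:2206.06567 — 3 statements merged into one kernel-verified Lean document; each statement's English description precedes it below -/
import Mathlib

section
/- Let f, g ∈ ℂ[n, m_1, …, m_r] be polynomials such that there exists n_0 with: for all n ≥ n_0 and all w ∈ S_n, f(n, m_1(w), …, m_r(w)) = g(n, m_1(w), …, m_r(w)), where m_i(w) is the number of i-cycles of w. Then f = g as polynomials in ℂ[n, m_1, …, m_r]. -/
open Finset

/-- The cycles (orbits) of a permutation of `Fin n` (fixed points count as 1-cycles). -/
def cyclesOf {n : ℕ} (w : Equiv.Perm (Fin n)) : Finset (Finset (Fin n)) :=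
  Finset.image (fun i => Finset.univ.filter (fun j => w.SameCycle i j)) Finset.univ

/-- `m_i(w)`: the number of cycles of length `i` of the permutation `w`. -/
def numCycLen {n : ℕ} (w : Equiv.Perm (Fin n)) (i : ℕ) : ℕ :=
  ((cyclesOf w).filter (fun C => C.card = i)).card

/-- The evaluation point in `ℂ^{r+1}` attached to `w ∈ S_n`: variable `0` gets the value
`n` and variable `j` (for `1 ≤ j ≤ r`) gets the cycle count `m_j(w)`. -/
def cycEval {n : ℕ} (r : ℕ) (w : Equiv.Perm (Fin n)) : Fin (r + 1) → ℂ :=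
  fun j => if (j : ℕ) = 0 then (n : ℂ) else (numCycLen w (j : ℕ) : ℂ)



lemma poly_zero_of_eventually_nat_root (P : Polynomial ℂ) (N : ℕ)
    (h : ∀ n : ℕ, n ≥ N → P.eval (n : ℂ) = 0) : P = 0 := by
  apply Polynomial.eq_zero_of_infinite_isRoot
  apply Set.infinite_of_injective_forall_mem (f := fun k : ℕ => ((N + k : ℕ) : ℂ))
  case hf => intro k; exact h (N + k) (Nat.le_add_right _ _)
  case hi =>
    intro a b hab
    have := Nat.cast_injective (R := ℂ) hab
    omega

lemma mv_zero_of_nat_grid : ∀ {k : ℕ} (q : MvPolynomial (Fin k) ℂ),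
    (∀ a : Fin k → ℕ, MvPolynomial.eval (fun i => (a i : ℂ)) q = 0) → q = 0 := by
  intro k
  induction k with
  | zero =>
    intro q hq
    obtain ⟨c, rfl⟩ := MvPolynomial.C_surjective (Fin 0) q
    have := hq (fun i => 0)
    simpa using this
  | succ k ih =>
    intro q hq
    have key : ∀ a : Fin k → ℕ,
        Polynomial.map (MvPolynomial.eval (fun i => (a i : ℂ))) (MvPolynomial.finSuccEquiv ℂ k q) = 0 := by
      intro a
      apply poly_zero_of_eventually_nat_root _ 0
      intro n _
      rw [← MvPolynomial.eval_eq_eval_mv_eval']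
      have := hq (Fin.cons n a)
      convert this using 2
      apply congrArg
      funext j
      refine Fin.cases ?_ ?_ j <;> simp
    have hcoeff : ∀ d : ℕ, (MvPolynomial.finSuccEquiv ℂ k q).coeff d = 0 := by
      intro d
      apply ih
      intro a
      have := congrArg (fun P => Polynomial.coeff P d) (key a)
      simpa [Polynomial.coeff_map] using this
    have : MvPolynomial.finSuccEquiv ℂ k q = 0 := Polynomial.ext fun d => by simp [hcoeff d]
    have := congrArg (MvPolynomial.finSuccEquiv ℂ k).symm this
    simpa using this

lemma orbit_of_notMem_support {n : ℕ} {w : Equiv.Perm (Fin n)} {x : Fin n}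
    (hx : x ∉ w.support) :
    Finset.univ.filter (fun j => w.SameCycle x j) = {x} := by
  rw [Equiv.Perm.notMem_support] at hx
  ext j
  simp only [mem_filter, mem_univ, true_and, mem_singleton]
  constructor
  · rintro ⟨k, hk⟩
    rw [← hk, Equiv.Perm.zpow_apply_eq_self_of_apply_eq_self hx]
  · rintro rfl; exact Equiv.Perm.SameCycle.refl _ _

lemma orbit_of_mem_support {n : ℕ} {w : Equiv.Perm (Fin n)} {x : Fin n}
    (hx : x ∈ w.support) :
    Finset.univ.filter (fun j => w.SameCycle x j) = (w.cycleOf x).support := by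
  ext j
  simp only [mem_filter, mem_univ, true_and, Equiv.Perm.mem_support_cycleOf_iff]
  exact ⟨fun h => ⟨h, hx⟩, fun h => h.1⟩

lemma numCycLen_one {n : ℕ} (w : Equiv.Perm (Fin n)) :
    numCycLen w 1 = n - w.support.card := by
  have : (cyclesOf w).filter (fun C => C.card = 1)
      = (Finset.univ \ w.support).image (fun x => {x}) := by
    ext C
    simp only [mem_filter, cyclesOf, mem_image, mem_univ, true_and, mem_sdiff]
    constructor
    · rintro ⟨⟨x, rfl⟩, hcard⟩
      by_cases hx : x ∈ w.support
      · exfalso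
        have h1 : x ∈ Finset.univ.filter (fun j => w.SameCycle x j) := by
          simp only [mem_filter, mem_univ, true_and]
          exact Equiv.Perm.SameCycle.refl _ _
        have h2 : w x ∈ Finset.univ.filter (fun j => w.SameCycle x j) := by
          simp only [mem_filter, mem_univ, true_and]
          exact Equiv.Perm.sameCycle_apply_right.mpr (Equiv.Perm.SameCycle.refl _ _)
        have hne : w x ≠ x := Equiv.Perm.mem_support.mp hx
        rw [Finset.card_eq_one] at hcard
        obtain ⟨y, hy⟩ := hcard
        rw [hy, mem_singleton] at h1 h2
        exact hne (h2.trans h1.symm)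
      · exact ⟨x, hx, (orbit_of_notMem_support hx).symm⟩
    · rintro ⟨x, hx, rfl⟩
      exact ⟨⟨x, orbit_of_notMem_support hx⟩, card_singleton x⟩
  rw [numCycLen, this, Finset.card_image_of_injective _ (fun a b h => by
      simpa using h)]
  rw [Finset.card_sdiff_of_subset (subset_univ _)]
  simp

lemma numCycLen_of_two_le {n : ℕ} (w : Equiv.Perm (Fin n)) {i : ℕ} (hi : 2 ≤ i) :
    numCycLen w i = Multiset.count i w.cycleType := by
  have himg : (cyclesOf w).filter (fun C => C.card = i)
      = (w.cycleFactorsFinset.filter (fun c => c.support.card = i)).image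
          (fun c => c.support) := by
    ext C
    simp only [mem_filter, cyclesOf, mem_image, mem_univ, true_and]
    constructor
    · rintro ⟨⟨x, rfl⟩, hcard⟩
      have hx : x ∈ w.support := by
        by_contra hx
        rw [orbit_of_notMem_support hx] at hcard
        simp at hcard
        omega
      refine ⟨w.cycleOf x, ⟨?_, ?_⟩, ?_⟩
      · exact Equiv.Perm.cycleOf_mem_cycleFactorsFinset_iff.mpr hx
      · rw [← orbit_of_mem_support hx]; exact hcard
      · exact (orbit_of_mem_support hx).symm
    · rintro ⟨c, ⟨hc, hcard⟩, rfl⟩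
      have hne : c.support.Nonempty := by
        rw [← Finset.card_pos, hcard]; omega
      obtain ⟨x, hx⟩ := hne
      have hcx : c = w.cycleOf x := Equiv.Perm.cycle_is_cycleOf hx hc
      have hxs : x ∈ w.support := by
        rw [← Equiv.Perm.cycleOf_mem_cycleFactorsFinset_iff, ← hcx]; exact hc
      exact ⟨⟨x, by rw [orbit_of_mem_support hxs, ← hcx]⟩, hcard⟩
  have hinj : Set.InjOn (fun c : Equiv.Perm (Fin n) => c.support)
      (w.cycleFactorsFinset.filter (fun c => c.support.card = i)) := by
    intro c hc c' hc' hcc'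
    simp only [coe_filter, Set.mem_setOf_eq] at hc hc'
    have hne : c.support.Nonempty := by
      rw [← Finset.card_pos, hc.2]; omega
    obtain ⟨x, hx⟩ := hne
    have hx' : x ∈ c'.support := by
      have : c.support = c'.support := hcc'
      rw [← this]; exact hx
    rw [Equiv.Perm.cycle_is_cycleOf hx hc.1, Equiv.Perm.cycle_is_cycleOf hx' hc'.1]
  rw [numCycLen, himg, Finset.card_image_of_injOn hinj]
  rw [Equiv.Perm.cycleType_def, Multiset.count_map, Finset.card, Finset.filter_val]
  congr 1
  apply Multiset.filter_congr
  intro c _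
  simp [Function.comp, eq_comm]

lemma exists_perm_numCycLen (r : ℕ) (a : Fin r → ℕ) (n : ℕ)
    (hn : (∑ i : Fin r, ((i : ℕ) + 1) * a i) + r + 2 ≤ n) :
    ∃ w : Equiv.Perm (Fin n), ∀ i : Fin r, numCycLen w ((i : ℕ) + 1) = a i := by
  set S : ℕ := ∑ i : Fin r, ((i : ℕ) + 1) * a i with hS
  set Filt : Finset (Fin r) := Finset.univ.filter (fun i => (i : ℕ) ≠ 0) with hFilt
  set S' : ℕ := ∑ i ∈ Filt, ((i : ℕ) + 1) * a i with hS'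
  set L : ℕ := n - S with hL
  have hSn : S + (r + 2) ≤ n := by omega
  have hLn : n = S + L := by omega
  have hLr : r + 2 ≤ L := by omega
  have hS'S : S' ≤ S := Finset.sum_le_sum_of_subset (Finset.filter_subset _ _)
  set m : Multiset ℕ := ({L} : Multiset ℕ) + ∑ i ∈ Filt, Multiset.replicate (a i) ((i : ℕ) + 1)
    with hm
  have hmsum : m.sum = L + S' := by
    rw [hm, Multiset.sum_add, Multiset.sum_singleton]
    congr 1
    rw [hS']
    rw [Multiset.sum_sum]
    apply Finset.sum_congr rfl
    intro i _
    rw [Multiset.sum_replicate, smul_eq_mul, mul_comm]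
  have hex : ∃ w : Equiv.Perm (Fin n), w.cycleType = m := by
    rw [Equiv.Perm.exists_with_cycleType_iff]
    constructor
    · rw [hmsum, Fintype.card_fin]; omega
    · intro x hx
      rw [hm, Multiset.mem_add] at hx
      rcases hx with hx | hx
      · rw [Multiset.mem_singleton] at hx; omega
      · rw [Multiset.mem_sum] at hx
        obtain ⟨i, hi, hxi⟩ := hx
        rw [Multiset.eq_of_mem_replicate hxi]
        rw [hFilt, Finset.mem_filter] at hi
        omega
  obtain ⟨w, hw⟩ := hex
  have hsupp : w.support.card = L + S' := by
    rw [← Equiv.Perm.sum_cycleType, hw, hmsum]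
  refine ⟨w, fun i => ?_⟩
  by_cases hi0 : (i : ℕ) = 0
  · rw [hi0]
    rw [numCycLen_one, hsupp]
    have hsplit := Finset.sum_filter_add_sum_filter_not Finset.univ
      (fun i : Fin r => (i : ℕ) ≠ 0) (fun i => ((i : ℕ) + 1) * a i)
    have hzero : Finset.univ.filter (fun j : Fin r => ¬ ((j : ℕ) ≠ 0)) = {i} := by
      ext j
      simp only [Finset.mem_filter, Finset.mem_univ, true_and, Finset.mem_singleton,
        not_not]
      constructor
      · intro hj; exact Fin.ext (by omega)
      · rintro rfl; exact hi0
    rw [hzero, Finset.sum_singleton, hi0] at hsplit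
    simp only [zero_add, one_mul] at hsplit
    rw [← hS', ← hS] at hsplit
    omega
  · rw [numCycLen_of_two_le w (by omega), hw, hm]
    rw [Multiset.count_add, Multiset.count_singleton]
    have hiL : ((i : ℕ) + 1 = L) = False := by
      have := i.isLt; simp only [eq_iff_iff, iff_false]; omega
    rw [if_neg (by have := i.isLt; omega)]
    rw [Multiset.count_sum']
    rw [zero_add]
    rw [Finset.sum_eq_single_of_mem i (by rw [hFilt, Finset.mem_filter]; exact ⟨Finset.mem_univ _, hi0⟩)]
    · rw [Multiset.count_replicate, if_pos rfl]
    · intro j _ hji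
      rw [Multiset.count_replicate, if_neg]
      intro hc
      exact hji (Fin.ext (by omega))


/-- If two polynomials `f, g ∈ ℂ[n, m_1, …, m_r]` satisfy
`f(n, m_1(w), …, m_r(w)) = g(n, m_1(w), …, m_r(w))` for all `w ∈ S_n` and all sufficiently
large `n`, then `f = g` as polynomials. -/
theorem polynomial_eq_of_eval_eq_on_perms {r : ℕ} (f g : MvPolynomial (Fin (r + 1)) ℂ)
    (h : ∃ n₀ : ℕ, ∀ n ≥ n₀, ∀ w : Equiv.Perm (Fin n),
      MvPolynomial.eval (cycEval r w) f = MvPolynomial.eval (cycEval r w) g) :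
    f = g := by
  obtain ⟨n₀, hfg⟩ := h
  have hzero : ∀ a : Fin r → ℕ, ∀ n : ℕ,
      n ≥ max n₀ ((∑ i : Fin r, ((i : ℕ) + 1) * a i) + r + 2) →
      MvPolynomial.eval (Fin.cons (n : ℂ) (fun i => (a i : ℂ))) (f - g) = 0 := by
    intro a n hn
    obtain ⟨w, hw⟩ := exists_perm_numCycLen r a n (le_trans (le_max_right _ _) hn)
    have hpt : cycEval r w = Fin.cons (n : ℂ) (fun i => (a i : ℂ)) := by
      funext j
      refine Fin.cases ?_ (fun i => ?_) j
      · simp [cycEval]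
      · simp only [cycEval, Fin.cons_succ, Fin.val_succ]
        rw [if_neg (by omega), hw i]
    rw [map_sub, ← hpt, hfg n (le_trans (le_max_left _ _) hn) w, sub_self]
  have key : f - g = 0 := by
    have hQ : MvPolynomial.finSuccEquiv ℂ r (f - g) = 0 := by
      apply Polynomial.ext
      intro d
      rw [Polynomial.coeff_zero]
      apply mv_zero_of_nat_grid
      intro a
      have hP : Polynomial.map (MvPolynomial.eval (fun i => (a i : ℂ)))
          (MvPolynomial.finSuccEquiv ℂ r (f - g)) = 0 := by
        apply poly_zero_of_eventually_nat_root _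
          (max n₀ ((∑ i : Fin r, ((i : ℕ) + 1) * a i) + r + 2))
        intro n hn
        rw [← MvPolynomial.eval_eq_eval_mv_eval']
        exact hzero a n hn
      have := congrArg (fun P => Polynomial.coeff P d) hP
      simpa [Polynomial.coeff_map] using this
    have := congrArg (MvPolynomial.finSuccEquiv ℂ r).symm hQ
    simpa using this
  exact sub_eq_zero.mp key
end

section
/- The variance of the excedance statistic on a conjugacy class satisfies R(exc²) − (R exc)² = (n − m_1 − 2m_2)/12 as functions on S_n, where m_1(w) and m_2(w) are the numbers of fixed points and of 2-cycles of w. In particular, the variance of exc on the conjugacy class of cycle type λ in S_n is (n − m_1(λ) − 2 m_2(λ))/12. -/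
/-! Conjugating `w` by a uniform `σ` turns `exc` into `∑ₐ [σ a < σ (w a)]`, a sum of indicators
`Xₐ` with `Xₐ = 0` when `a` is fixed. By relabelling symmetry of `σ`, the relative order of `k`
distinct points is uniform, so `𝔼 Xₐ = 1/2` and the covariance of `Xₐ` and `X_b` can be read off
from how `{a, w a}` meets `{b, w b}`: it is `1/4` for `b = a`, `-1/4` for `b = w a` on a 2-cycle,
`-1/12` for `b = w^{±1} a` on a longer cycle, and `0` otherwise. Summing over `b`, each point of
a cycle of length at least 3 contributes `1/12` to the variance and every other point `0`, and
there are `n - m₁ - 2 m₂` such points. -/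

open Finset

/-- The excedance statistic: `exc(w) = #{i : w(i) > i}`. -/
def excStat {n : ℕ} (w : Equiv.Perm (Fin n)) : ℕ :=
  (Finset.univ.filter (fun i : Fin n => i < w i)).card

/-- The Reynolds operator: `R f(w) = (1/n!) ∑_{v ∈ S_n} f(v⁻¹ w v)`. -/
noncomputable def reynolds {n : ℕ} (f : Equiv.Perm (Fin n) → ℝ)
    (w : Equiv.Perm (Fin n)) : ℝ :=
  (n.factorial : ℝ)⁻¹ * ∑ v : Equiv.Perm (Fin n), f (v⁻¹ * w * v)

open Equiv Function
open scoped BigOperators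

theorem expect_sq_sum_sub_sq_expect_sum {ι Ω : Type*} (s : Finset ι) (t : Finset Ω)
    (X : ι → Ω → ℝ) :
    𝔼 ω ∈ t, (∑ i ∈ s, X i ω) ^ 2 - (𝔼 ω ∈ t, ∑ i ∈ s, X i ω) ^ 2 =
      ∑ i ∈ s, ∑ j ∈ s, (𝔼 ω ∈ t, X i ω * X j ω - (𝔼 ω ∈ t, X i ω) * 𝔼 ω ∈ t, X j ω) := by
  rw [expect_sum_comm]
  simp only [sq, sum_mul_sum, expect_sum_comm, sum_sub_distrib]

theorem expect_perm_mul_right {α : Type*} [Fintype α] [DecidableEq α] (τ : Perm α)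
    (F : Perm α → ℝ) : 𝔼 σ, F (σ * τ) = 𝔼 σ, F σ :=
  Fintype.expect_equiv (Equiv.mulRight τ) _ _ fun _ => rfl

section RelativeOrder

variable {α : Type*} [LinearOrder α]

def ltInd (σ : Perm α) (a b : α) : ℝ := if σ a < σ b then 1 else 0

variable {σ : Perm α} {a b c d : α}

theorem ltInd_mul (σ τ : Perm α) (a b : α) : ltInd (σ * τ) a b = ltInd σ (τ a) (τ b) := rfl

theorem ltInd_self : ltInd σ a a = 0 := by simp [ltInd]

theorem ltInd_mul_self : ltInd σ a b * ltInd σ a b = ltInd σ a b := by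
  unfold ltInd; split_ifs <;> norm_num

theorem ltInd_mul_ltInd_swap : ltInd σ a b * ltInd σ b a = 0 := by
  unfold ltInd; split_ifs <;> grind

theorem ltInd_add_ltInd_swap (hab : a ≠ b) : ltInd σ a b + ltInd σ b a = 1 := by
  have := σ.injective.ne hab
  unfold ltInd; split_ifs <;> grind

theorem ltInd_eq_sum_chains (hab : a ≠ b) (hac : a ≠ c) (hbc : b ≠ c) :
    ltInd σ a b = ltInd σ a b * ltInd σ b c + ltInd σ a c * ltInd σ c b +
      ltInd σ c a * ltInd σ a b := by
  have := σ.injective.ne hab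
  have := σ.injective.ne hac
  have := σ.injective.ne hbc
  unfold ltInd; split_ifs <;> grind

variable [Fintype α] [DecidableEq α]

theorem expect_ltInd_mul_ltInd_perm (τ : Perm α) (a b c d : α) :
    𝔼 σ, ltInd σ (τ a) (τ b) * ltInd σ (τ c) (τ d) = 𝔼 σ, ltInd σ a b * ltInd σ c d :=
  expect_perm_mul_right τ fun σ => ltInd σ a b * ltInd σ c d

theorem expect_ltInd (hab : a ≠ b) : 𝔼 σ : Perm α, ltInd σ a b = 1 / 2 := by
  have hswap : 𝔼 σ : Perm α, ltInd σ b a = 𝔼 σ : Perm α, ltInd σ a b := by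
    simpa [ltInd_mul] using expect_perm_mul_right (swap a b) fun σ => ltInd σ a b
  have hsum : 𝔼 σ : Perm α, ltInd σ a b + 𝔼 σ : Perm α, ltInd σ b a = 1 := by
    rw [← expect_add_distrib]
    simp only [ltInd_add_ltInd_swap hab, Fintype.expect_const]
  linarith

theorem expect_ltInd_mul_ltInd (hab : a ≠ b) (hcd : c ≠ d) (hac : a ≠ c) (had : a ≠ d)
    (hbc : b ≠ c) (hbd : b ≠ d) :
    𝔼 σ : Perm α, ltInd σ a b * ltInd σ c d = 1 / 4 := by
  have hswap := expect_ltInd_mul_ltInd_perm (swap c d) a b c d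
  rw [swap_apply_of_ne_of_ne hac had, swap_apply_of_ne_of_ne hbc hbd, swap_apply_left,
    swap_apply_right] at hswap
  have hsum : 𝔼 σ : Perm α, (ltInd σ a b * ltInd σ c d + ltInd σ a b * ltInd σ d c) = 1 / 2 := by
    simp only [← mul_add, ltInd_add_ltInd_swap hcd, mul_one, expect_ltInd hab]
  rw [expect_add_distrib] at hsum
  linarith

theorem expect_ltInd_mul_ltInd_chain (hab : a ≠ b) (hac : a ≠ c) (hbc : b ≠ c) :
    𝔼 σ : Perm α, ltInd σ a b * ltInd σ b c = 1 / 6 := by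
  -- `σ a < σ b` splits into three chains according to where `σ c` falls, each of which is a
  -- relabelling of `σ a < σ b < σ c` by one or two transpositions.
  have hacb := expect_ltInd_mul_ltInd_perm (swap b c) a b b c
  rw [swap_apply_of_ne_of_ne hab hac, swap_apply_left, swap_apply_right] at hacb
  have hbac := expect_ltInd_mul_ltInd_perm (swap a b) a b b c
  rw [swap_apply_left, swap_apply_right, swap_apply_of_ne_of_ne hac.symm hbc.symm] at hbac
  have hcab := expect_ltInd_mul_ltInd_perm (swap b c) b a a c
  rw [swap_apply_left, swap_apply_of_ne_of_ne hab hac, swap_apply_right] at hcab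
  have hsum : 𝔼 σ : Perm α, (ltInd σ a b * ltInd σ b c + ltInd σ a c * ltInd σ c b +
      ltInd σ c a * ltInd σ a b) = 1 / 2 := by
    simp only [← ltInd_eq_sum_chains hab hac hbc, expect_ltInd hab]
  rw [expect_add_distrib, expect_add_distrib] at hsum
  linarith

end RelativeOrder

section Covariance

variable {α : Type*} [Fintype α] [DecidableEq α] [LinearOrder α]

noncomputable def excCov (w : Perm α) (a b : α) : ℝ :=
  𝔼 σ : Perm α, ltInd σ a (w a) * ltInd σ b (w b) -
    (𝔼 σ : Perm α, ltInd σ a (w a)) * 𝔼 σ : Perm α, ltInd σ b (w b)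

variable {w : Perm α}

theorem excCov_comm (a b : α) : excCov w a b = excCov w b a := by
  simp only [excCov, mul_comm]

theorem excCov_eq_zero_of_apply_eq_self {a : α} (ha : w a = a) (b : α) : excCov w a b = 0 := by
  simp [excCov, ha, ltInd_self]

theorem excCov_self {a : α} (ha : w a ≠ a) : excCov w a a = 1 / 4 := by
  rw [excCov]
  simp only [ltInd_mul_self, expect_ltInd ha.symm]
  norm_num

theorem excCov_apply_of_apply_apply_eq {a : α} (ha : w a ≠ a) (h2 : w (w a) = a) :
    excCov w a (w a) = -1 / 4 := by
  rw [excCov, h2]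
  simp only [ltInd_mul_ltInd_swap, Finset.expect_const_zero, expect_ltInd ha.symm,
    expect_ltInd ha]
  norm_num

theorem excCov_apply_of_apply_apply_ne {a : α} (ha : w a ≠ a) (h2 : w (w a) ≠ a) :
    excCov w a (w a) = -1 / 12 := by
  have hwa : w (w a) ≠ w a := fun h => ha (w.injective h)
  rw [excCov, expect_ltInd_mul_ltInd_chain ha.symm h2.symm hwa.symm, expect_ltInd ha.symm,
    expect_ltInd hwa.symm]
  norm_num

theorem excCov_eq_zero_of_disjoint {a b : α} (ha : w a ≠ a) (hb : w b ≠ b) (hab : a ≠ b)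
    (hbwa : b ≠ w a) (hawb : a ≠ w b) : excCov w a b = 0 := by
  rw [excCov, expect_ltInd_mul_ltInd ha.symm hb.symm hab hawb hbwa.symm
    (w.injective.ne hab), expect_ltInd ha.symm, expect_ltInd hb.symm]
  norm_num

theorem sum_excCov (a : α) :
    ∑ b, excCov w a b = if w a ≠ a ∧ w (w a) ≠ a then 1 / 12 else 0 := by
  by_cases ha : w a = a
  · simp [excCov_eq_zero_of_apply_eq_self ha, ha]
  have hwinv : w (w⁻¹ a) = a := by simp
  -- Outside `{a, w a, w⁻¹ a}`, the pair `{b, w b}` is disjoint from `{a, w a}`.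
  have hsupp : ∀ b ∉ ({a, w a, w⁻¹ a} : Finset α), excCov w a b = 0 := by
    intro b hb
    simp only [mem_insert, mem_singleton, not_or] at hb
    obtain ⟨hba, hbwa, hbwinv⟩ := hb
    by_cases hb : w b = b
    · rw [excCov_comm, excCov_eq_zero_of_apply_eq_self hb]
    · refine excCov_eq_zero_of_disjoint ha hb (Ne.symm hba) hbwa fun h => hbwinv ?_
      simp [h]
  rw [← sum_subset (subset_univ _) fun b _ hb => hsupp b hb]
  by_cases h2 : w (w a) = a
  · have hinv : w⁻¹ a = w a := by rw [Perm.inv_eq_iff_eq, h2]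
    rw [hinv, insert_eq_of_mem (mem_singleton_self (w a)), sum_pair (Ne.symm ha), excCov_self ha,
      excCov_apply_of_apply_apply_eq ha h2, if_neg (by simp [h2])]
    norm_num
  · have hinv_ne : w⁻¹ a ≠ a := fun h => ha (Perm.inv_eq_iff_eq.1 h).symm
    have hinv_ne' : w a ≠ w⁻¹ a := fun h => h2 (Perm.eq_inv_iff_eq.1 h)
    have hinv_cov : excCov w a (w⁻¹ a) = -1 / 12 := by
      have h := excCov_apply_of_apply_apply_ne (a := w⁻¹ a) (by rwa [hwinv, ne_comm])
        (by rwa [hwinv])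
      rwa [hwinv, excCov_comm] at h
    rw [sum_insert (by simpa [not_or] using ⟨Ne.symm ha, Ne.symm hinv_ne⟩), sum_pair hinv_ne',
      excCov_self ha, excCov_apply_of_apply_apply_ne ha h2, hinv_cov, if_pos ⟨ha, h2⟩]
    norm_num

theorem expect_sq_sub_sq_expect_sum_ltInd (w : Perm α) :
    𝔼 σ : Perm α, (∑ a, ltInd σ a (w a)) ^ 2 - (𝔼 σ : Perm α, ∑ a, ltInd σ a (w a)) ^ 2 =
      #{a | w a ≠ a ∧ w (w a) ≠ a} / 12 := by
  rw [expect_sq_sum_sub_sq_expect_sum]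
  change ∑ a, ∑ b, excCov w a b = _
  simp only [sum_excCov, sum_ite, sum_const_zero, sum_const, add_zero, nsmul_eq_mul]
  ring

end Covariance

section Cycles

variable {α : Type*} [Fintype α] [DecidableEq α] (w : Perm α)

theorem card_sameCycle_eq_minimalPeriod (a : α) :
    #{b | w.SameCycle a b} = minimalPeriod w a := by
  classical
  have h : minimalPeriod w a = _ := MulAction.minimalPeriod_eq_card (a := w) (b := a)
  rw [h, ← Set.toFinset_card]
  congr 1
  ext b
  simp only [mem_filter, mem_univ, true_and, Set.mem_toFinset, MulAction.mem_orbit_iff,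
    Subtype.exists, Subgroup.mem_zpowers_iff]
  exact ⟨fun ⟨k, hk⟩ => ⟨w ^ k, ⟨k, rfl⟩, hk⟩, fun ⟨_, ⟨k, hk⟩, hb⟩ => ⟨k, hk ▸ hb⟩⟩

theorem filter_sameCycle_eq_iff {a b : α} :
    univ.filter (w.SameCycle a) = univ.filter (w.SameCycle b) ↔ w.SameCycle a b := by
  constructor
  · intro h
    have hb : b ∈ univ.filter (w.SameCycle b) := mem_filter.2 ⟨mem_univ b, .refl w b⟩
    rw [← h] at hb
    exact (mem_filter.1 hb).2
  · intro h
    ext c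
    simp only [mem_filter, mem_univ, true_and]
    exact ⟨h.symm.trans, h.trans⟩

theorem card_fixed_add_card_twoCycle_add_card_longCycle :
    #{a | w a = a} + #{a | w a ≠ a ∧ w (w a) = a} + #{a | w a ≠ a ∧ w (w a) ≠ a} =
      Fintype.card α := by
  rw [← card_univ, add_assoc, ← filter_filter, ← filter_filter,
    card_filter_add_card_filter_not, card_filter_add_card_filter_not]

end Cycles

section ConjugacyClass

variable {n : ℕ} (w : Perm (Fin n))

theorem card_minimalPeriod_eq_mul_numCycLen (k : ℕ) : #{a | minimalPeriod w a = k} = k * numCycLen w k := by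
  have hmaps : ∀ a ∈ ({a | minimalPeriod w a = k} : Finset (Fin n)),
      univ.filter (w.SameCycle a) ∈ (cyclesOf w).filter (·.card = k) := by
    intro a ha
    rw [mem_filter, card_sameCycle_eq_minimalPeriod, (mem_filter.1 ha).2]
    exact ⟨mem_image_of_mem _ (mem_univ a), rfl⟩
  rw [card_eq_sum_card_fiberwise hmaps, numCycLen, mul_comm]
  refine sum_const_nat fun C hC => ?_
  obtain ⟨hC, hCk⟩ := mem_filter.1 hC
  obtain ⟨b, -, rfl⟩ := mem_image.1 hC
  rw [← hCk]
  congr 1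
  ext a
  simp only [mem_filter, mem_univ, true_and, filter_sameCycle_eq_iff]
  rw [← card_sameCycle_eq_minimalPeriod]
  exact ⟨fun h => h.2.symm, fun h => ⟨congrArg card ((filter_sameCycle_eq_iff w).2 h.symm), h.symm⟩⟩

theorem numCycLen_one_s18 : numCycLen w 1 = #{a | w a = a} := by
  rw [← one_mul (numCycLen w 1), ← card_minimalPeriod_eq_mul_numCycLen]
  simp only [minimalPeriod_eq_one_iff_isFixedPt, IsFixedPt]

theorem two_mul_numCycLen_two : 2 * numCycLen w 2 = #{a | w a ≠ a ∧ w (w a) = a} := by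
  rw [← card_minimalPeriod_eq_mul_numCycLen]
  simp [minimalPeriod_eq_prime_iff, IsPeriodicPt, IsFixedPt, and_comm]

theorem reynolds_eq_expect (f : Perm (Fin n) → ℝ) :
    reynolds f w = 𝔼 σ, f (σ * w * σ⁻¹) := by
  rw [reynolds, Fintype.expect_eq_sum_div_card, Fintype.card_perm, Fintype.card_fin,
    inv_mul_eq_div, ← Equiv.sum_comp (Equiv.inv (Perm (Fin n)))]
  simp

theorem excStat_conj_eq_sum_ltInd (σ : Perm (Fin n)) :
    (excStat (σ * w * σ⁻¹) : ℝ) = ∑ a, ltInd σ a (w a) := by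
  rw [excStat, natCast_card_filter, ← Equiv.sum_comp σ]
  simp [ltInd]

end ConjugacyClass

/-- `R(exc²) − (R exc)² = (n − m_1 − 2m_2)/12`: the variance of the excedance statistic on
the conjugacy class of `w ∈ S_n` is `(n − m_1(w) − 2 m_2(w))/12`, where `m_1(w)` and
`m_2(w)` are the numbers of fixed points and of 2-cycles of `w`. -/
theorem variance_exc {n : ℕ} (w : Equiv.Perm (Fin n)) :
    reynolds (fun u => (excStat u : ℝ) ^ 2) w - (reynolds (fun u => (excStat u : ℝ)) w) ^ 2 =
      ((n : ℝ) - numCycLen w 1 - 2 * numCycLen w 2) / 12 := by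
  simp only [reynolds_eq_expect, excStat_conj_eq_sum_ltInd, expect_sq_sub_sq_expect_sum_ltInd]
  have hcard := card_fixed_add_card_twoCycle_add_card_longCycle w
  rw [Fintype.card_fin, ← numCycLen_one_s18, ← two_mul_numCycLen_two] at hcard
  have hcardℝ : (numCycLen w 1 + 2 * numCycLen w 2 + #{a | w a ≠ a ∧ w (w a) ≠ a} : ℝ) = n := by
    exact_mod_cast hcard
  rw [← hcardℝ]
  ring
end

section
/- Fix d, k ≥ 0 and let f : S_n → ℝ be a k-local statistic. If λ ⊢ n satisfies m_1(λ) = m_2(λ) = ⋯ = m_{dk}(λ) = 0 (no cycles of length ≤ dk), then the d-th conditional moment of f on the conjugacy class K_λ equals the d-th conditional moment on the class of n-cycles: E(f^d | K_λ) = E(f^d | K_{(n)}). -/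
open Finset

/-- Indicator function of a partial permutation: `1_{I,J}(w) = 1` if the permutation `w`
maps the list `I` entrywise to the list `J`, and `0` otherwise. -/
def indFunR {n : ℕ} (I J : List (Fin n)) (w : Equiv.Perm (Fin n)) : ℝ :=
  if I.map ⇑w = J then 1 else 0

/-- A statistic `f : S_n → ℝ` is `k`-local if it lies in the `ℝ`-span of the indicator
functions `1_{I,J}` over partial permutations of size (at most) `k`. -/
def IsLocalR (n k : ℕ) (f : Equiv.Perm (Fin n) → ℝ) : Prop :=
  f ∈ Submodule.span ℝ {g : Equiv.Perm (Fin n) → ℝ | ∃ I J : List (Fin n),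
    I.Nodup ∧ J.Nodup ∧ I.length = J.length ∧ I.length ≤ k ∧ g = indFunR I J}

/-- The cycle type of a permutation, as the multiset of its orbit sizes. -/
def typeOf {n : ℕ} (w : Equiv.Perm (Fin n)) : Multiset ℕ :=
  (cyclesOf w).val.map Finset.card

/-!
By linearity and locality additivity, `f ^ d` is a combination of indicators of patterns `S`
(finite sets of prescribed values `u a = b`) with `#S ≤ dk`, and the Reynolds average of such an
indicator at `w` counts the `v` for which `v⁻¹ * w * v` extends `S`. This count is the same for
all permutations without cycles of length `≤ #S`, by strong induction on the number of points
of `S`. If every value of `S` is also an argument, `S` forces a cycle of length `≤ #S` and the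
count vanishes. Otherwise some edge `(x, y)` has a target `y` occurring nowhere else in `S`;
splitting the count of `S.erase (x, y)` according to the value at `x`, every fresh value
contributes the count of `S` (conjugate by a transposition), and every other value gives a
pattern with fewer points, so the count of `S` is determined by counts covered by induction.
-/

namespace PermPattern

open Equiv

section Periodic

variable {α : Type*}

def NoCyclesUpTo (w : Perm α) (E : ℕ) : Prop :=
  ∀ t j, 0 < j → j ≤ E → (w ^ j) t ≠ t

theorem NoCyclesUpTo.mono {w : Perm α} {E E' : ℕ} (hw : NoCyclesUpTo w E) (h : E' ≤ E) :
    NoCyclesUpTo w E' :=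
  fun t j hj hjE => hw t j hj (hjE.trans h)

theorem exists_pow_apply_eq_self_of_mapsTo (u : Perm α) {T : Finset α}
    (hT : ∀ t ∈ T, u t ∈ T) {t : α} (ht : t ∈ T) :
    ∃ j, 0 < j ∧ j ≤ #T ∧ (u ^ j) t = t := by
  have hmem : ∀ i, (u ^ i) t ∈ T := by
    intro i
    induction i with
    | zero => simpa using ht
    | succ i ih => rw [pow_succ', Perm.mul_apply]; exact hT _ ih
  obtain ⟨i, hi, i', hi', hne, heq⟩ := exists_ne_map_eq_of_card_lt_of_maps_to
    (s := range (#T + 1)) (by simp) fun i _ => hmem i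
  wlog hlt : i < i' generalizing i i'
  · exact this i' hi' i hi hne.symm heq.symm (by omega)
  refine ⟨i' - i, by omega, by have := mem_range.mp hi'; omega, (u ^ i).injective ?_⟩
  rw [← Perm.mul_apply, ← pow_add, Nat.add_sub_cancel' hlt.le]
  exact heq.symm

theorem NoCyclesUpTo.lt_card [Fintype α] [Nonempty α] {w : Perm α} {E : ℕ}
    (hw : NoCyclesUpTo w E) : E < Fintype.card α := by
  obtain ⟨t⟩ := ‹Nonempty α›
  obtain ⟨j, hj, hjn, hfix⟩ :=
    exists_pow_apply_eq_self_of_mapsTo w (T := univ) (fun _ _ => mem_univ _) (mem_univ t)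
  by_contra h
  exact hw t j hj (by rw [card_univ] at hjn; omega) hfix

theorem card_sameCycle_le_of_pow_apply_eq_self [Fintype α] [DecidableEq α] {w : Perm α}
    {t : α} {j : ℕ} (hj : 0 < j) (h : (w ^ j) t = t) : #{s | w.SameCycle t s} ≤ j := by
  have hper : Function.IsPeriodicPt w j t := by
    rw [Function.IsPeriodicPt, Function.IsFixedPt, Perm.iterate_eq_pow]
    exact h
  have hsub : ({s | w.SameCycle t s} : Finset α) ⊆ (range j).image fun i => (w ^ i) t := by
    intro s hs
    obtain ⟨i, rfl⟩ := (mem_filter.mp hs).2.exists_nat_pow_eq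
    refine mem_image.mpr ⟨i % j, mem_range.mpr (Nat.mod_lt _ hj), ?_⟩
    simpa only [Perm.iterate_eq_pow] using hper.iterate_mod_apply i
  exact (card_le_card hsub).trans (card_image_le.trans (card_range j).le)

end Periodic

section Counting

variable {α : Type*} [DecidableEq α]

def Extends (S : Finset (α × α)) (u : Perm α) : Prop :=
  ∀ p ∈ S, u p.1 = p.2

instance (S : Finset (α × α)) : DecidablePred (Extends S) :=
  fun u => inferInstanceAs (Decidable (∀ p ∈ S, u p.1 = p.2))

theorem extends_insert {S : Finset (α × α)} {x a : α} {u : Perm α} :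
    Extends (insert (x, a) S) u ↔ u x = a ∧ Extends S u :=
  Finset.forall_mem_insert _ _ _

def patternIndicator (S : Finset (α × α)) (u : Perm α) : ℝ :=
  if Extends S u then 1 else 0

theorem patternIndicator_mul (S T : Finset (α × α)) :
    patternIndicator S * patternIndicator T = patternIndicator (S ∪ T) := by
  funext u
  have hST : Extends (S ∪ T) u ↔ Extends S u ∧ Extends T u := forall_mem_union
  by_cases hS : Extends S u <;> by_cases hT : Extends T u <;> simp [patternIndicator, hST, hS, hT]

def points (S : Finset (α × α)) : Finset α :=
  S.image Prod.fst ∪ S.image Prod.snd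

theorem fst_mem_points {S : Finset (α × α)} {p : α × α} (hp : p ∈ S) : p.1 ∈ points S :=
  mem_union_left _ (mem_image_of_mem _ hp)

theorem snd_mem_points {S : Finset (α × α)} {p : α × α} (hp : p ∈ S) : p.2 ∈ points S :=
  mem_union_right _ (mem_image_of_mem _ hp)

theorem points_insert (S : Finset (α × α)) (p : α × α) :
    points (insert p S) = insert p.1 (insert p.2 (points S)) := by
  ext z
  simp only [points, image_insert, mem_union, mem_insert]
  tauto

theorem points_mono {S T : Finset (α × α)} (h : S ⊆ T) : points S ⊆ points T :=
  union_subset_union (image_subset_image h) (image_subset_image h)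

theorem Extends.swap_insert {q : Finset (α × α)} {x a b : α} {u : Perm α}
    (hu : Extends (insert (x, a) q) u) (ha : a ∉ insert x (points q))
    (hb : b ∉ insert x (points q)) :
    Extends (insert (x, b) q) (swap a b * u * swap a b) := by
  rw [extends_insert] at hu ⊢
  have hfix : ∀ z ∈ insert x (points q), swap a b z = z := fun z hz =>
    swap_apply_of_ne_of_ne (ne_of_mem_of_not_mem hz ha) (ne_of_mem_of_not_mem hz hb)
  refine ⟨?_, fun p hp => ?_⟩
  · simp [hfix x (mem_insert_self _ _), hu.1]
  · have h1 := hfix _ (mem_insert_of_mem (fst_mem_points hp))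
    have h2 := hfix _ (mem_insert_of_mem (snd_mem_points hp))
    simp [h1, hu.2 p hp, h2]

variable [Fintype α]

def conjCount (w : Perm α) (S : Finset (α × α)) : ℕ :=
  #{v | Extends S (v⁻¹ * w * v)}

theorem conjCount_eq_sum_insert (w : Perm α) (q : Finset (α × α)) (x : α) :
    conjCount w q = ∑ a, conjCount w (insert (x, a) q) := by
  rw [conjCount, card_eq_sum_card_fiberwise (f := fun v => (v⁻¹ * w * v) x) (t := univ)
    (fun _ _ => mem_univ _)]
  refine sum_congr rfl fun a _ => ?_
  rw [conjCount, filter_filter]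
  simp only [extends_insert, and_comm]

theorem conjCount_insert_swap (w : Perm α) {q : Finset (α × α)} {x a b : α}
    (ha : a ∉ insert x (points q)) (hb : b ∉ insert x (points q)) :
    conjCount w (insert (x, a) q) = conjCount w (insert (x, b) q) := by
  have hconj : ∀ v : Perm α, (v * swap a b)⁻¹ * w * (v * swap a b) =
      swap a b * (v⁻¹ * w * v) * swap a b := by
    intro v
    simp only [mul_inv_rev, swap_inv, mul_assoc]
  refine card_nbij' (· * swap a b) (· * swap a b) ?_ ?_ ?_ ?_
  · intro v hv
    simp only [coe_filter, Set.mem_ofPred_eq, mem_univ, true_and] at hv ⊢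
    rw [hconj]
    exact hv.swap_insert ha hb
  · intro v hv
    simp only [coe_filter, Set.mem_ofPred_eq, mem_univ, true_and] at hv ⊢
    rw [hconj, swap_comm]
    exact hv.swap_insert hb ha
  · intro v _
    simp [mul_assoc]
  · intro v _
    simp [mul_assoc]

theorem conjCount_eq_sum_add_card_mul (w : Perm α) {q : Finset (α × α)} {x y : α}
    (hy : y ∉ insert x (points q)) :
    conjCount w q = ∑ a ∈ insert x (points q), conjCount w (insert (x, a) q)
      + #(insert x (points q))ᶜ * conjCount w (insert (x, y) q) := by
  rw [conjCount_eq_sum_insert w q x, ← sum_add_sum_compl (insert x (points q)),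
    sum_congr rfl fun a ha => conjCount_insert_swap w (mem_compl.mp ha) hy, sum_const,
    smul_eq_mul]

theorem conjCount_eq_zero_of_snd_eq (w : Perm α) {S : Finset (α × α)} {x x' y : α}
    (h : (x, y) ∈ S) (h' : (x', y) ∈ S) (hne : x ≠ x') : conjCount w S = 0 := by
  rw [conjCount, card_eq_zero, filter_eq_empty_iff]
  intro v _ hv
  exact hne ((v⁻¹ * w * v).injective ((hv _ h).trans (hv _ h').symm))

theorem conjCount_eq_zero_of_snd_subset_fst {w : Perm α} {S : Finset (α × α)}
    (hw : NoCyclesUpTo w #S) (hS : S.Nonempty) (hsub : S.image Prod.snd ⊆ S.image Prod.fst) :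
    conjCount w S = 0 := by
  rw [conjCount, card_eq_zero, filter_eq_empty_iff]
  intro v _ hv
  obtain ⟨p, hp⟩ := hS
  have hT : ∀ t ∈ S.image Prod.fst, (v⁻¹ * w * v) t ∈ S.image Prod.fst := by
    intro t ht
    obtain ⟨r, hr, rfl⟩ := mem_image.mp ht
    rw [hv r hr]
    exact hsub (mem_image_of_mem _ hr)
  obtain ⟨j, hj, hjS, hfix⟩ := exists_pow_apply_eq_self_of_mapsTo _ hT (mem_image_of_mem _ hp)
  refine hw (v p.1) j hj (hjS.trans card_image_le) ?_
  rw [show (v⁻¹ * w * v) ^ j = v⁻¹ * w ^ j * v by simpa using conj_pow (a := v⁻¹) (b := w),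
    Perm.mul_apply, Perm.mul_apply, Perm.inv_eq_iff_eq] at hfix
  exact hfix

theorem conjCount_insert_eq_of_forall_insert {w c : Perm α} {q : Finset (α × α)} {x y : α}
    (hy : y ∉ insert x (points q)) (hq : conjCount w q = conjCount c q)
    (hjoin : ∀ a ∈ insert x (points q),
      conjCount w (insert (x, a) q) = conjCount c (insert (x, a) q)) :
    conjCount w (insert (x, y) q) = conjCount c (insert (x, y) q) := by
  have hsum := (conjCount_eq_sum_add_card_mul w hy).symm.trans
    (hq.trans (conjCount_eq_sum_add_card_mul c hy))
  rw [sum_congr rfl hjoin] at hsum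
  exact Nat.eq_of_mul_eq_mul_left (card_pos.mpr ⟨y, mem_compl.mpr hy⟩)
    (Nat.add_left_cancel hsum)

theorem conjCount_eq_of_noCyclesUpTo {w c : Perm α} {E : ℕ} (hw : NoCyclesUpTo w E)
    (hc : NoCyclesUpTo c E) (S : Finset (α × α)) (hS : #S ≤ E) :
    conjCount w S = conjCount c S := by
  induction hm : #(points S) using Nat.strong_induction_on generalizing S with
  | _ m ih =>
  subst hm
  rcases S.eq_empty_or_nonempty with rfl | hne
  · simp [conjCount, Extends]
  by_cases hclosed : S.image Prod.snd ⊆ S.image Prod.fst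
  · rw [conjCount_eq_zero_of_snd_subset_fst (hw.mono hS) hne hclosed,
      conjCount_eq_zero_of_snd_subset_fst (hc.mono hS) hne hclosed]
  obtain ⟨y, hyS, hyfst⟩ := not_subset.mp hclosed
  obtain ⟨⟨x, y⟩, hxy, rfl⟩ := mem_image.mp hyS
  set q := S.erase (x, y)
  have hqS : insert (x, y) q = S := insert_erase hxy
  by_cases hrep : y ∈ q.image Prod.snd
  · obtain ⟨⟨x', y⟩, hq, rfl⟩ := mem_image.mp hrep
    have hx' : x ≠ x' := fun h => (ne_of_mem_erase hq) (by rw [h])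
    rw [conjCount_eq_zero_of_snd_eq w hxy (mem_of_mem_erase hq) hx',
      conjCount_eq_zero_of_snd_eq c hxy (mem_of_mem_erase hq) hx']
  set B := insert x (points q)
  have hyB : y ∉ B := by
    simp only [B, points, mem_insert, mem_union, not_or]
    exact ⟨fun h => hyfst (h ▸ mem_image_of_mem Prod.fst hxy),
      fun h => hyfst (image_subset_image (erase_subset _ _) h), hrep⟩
  have hBS : #B < #(points S) := by
    have hsub : B ⊆ points S :=
      insert_subset (fst_mem_points hxy) (points_mono (erase_subset _ _))
    exact card_lt_card ((ssubset_iff_of_subset hsub).mpr ⟨y, snd_mem_points hxy, hyB⟩)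
  have hq : conjCount w q = conjCount c q :=
    ih _ ((card_le_card (subset_insert _ _)).trans_lt hBS) q (card_erase_le.trans hS) rfl
  have hjoin : ∀ a ∈ B, conjCount w (insert (x, a) q) = conjCount c (insert (x, a) q) := by
    intro a ha
    have hpoints : points (insert (x, a) q) ⊆ B := by
      rw [points_insert]
      exact insert_subset (mem_insert_self _ _) (insert_subset ha (subset_insert _ _))
    have hcard : #(insert (x, a) q) ≤ E :=
      (card_insert_le _ _).trans (card_erase_add_one hxy ▸ hS)
    exact ih _ ((card_le_card hpoints).trans_lt hBS) _ hcard rfl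
  rw [← hqS]
  exact conjCount_insert_eq_of_forall_insert hyB hq hjoin

end Counting

section Statistics

variable {n : ℕ}

def localSpan (n k : ℕ) : Submodule ℝ (Perm (Fin n) → ℝ) :=
  Submodule.span ℝ {g | ∃ S : Finset (Fin n × Fin n), #S ≤ k ∧ g = patternIndicator S}

theorem patternIndicator_mem_localSpan {k : ℕ} {S : Finset (Fin n × Fin n)} (hS : #S ≤ k) :
    patternIndicator S ∈ localSpan n k :=
  Submodule.subset_span ⟨S, hS, rfl⟩

theorem indFunR_eq_patternIndicator {I J : List (Fin n)} (h : I.length = J.length) :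
    indFunR I J = patternIndicator (I.zip J).toFinset := by
  funext u
  have : I.map u = J ↔ Extends (I.zip J).toFinset u := by
    rw [← List.forall₂_eq_eq_eq, List.forall₂_map_left_iff, List.forall₂_iff_zip]
    simp [Extends, h]
  simp only [indFunR, patternIndicator, this]

theorem IsLocalR.mem_localSpan {k : ℕ} {f : Perm (Fin n) → ℝ} (hf : IsLocalR n k f) :
    f ∈ localSpan n k := by
  refine Submodule.span_le.mpr ?_ hf
  rintro g ⟨I, J, -, -, hIJ, hk, rfl⟩
  rw [indFunR_eq_patternIndicator hIJ]
  refine patternIndicator_mem_localSpan ((List.toFinset_card_le _).trans ?_)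
  simpa [List.length_zip, hIJ] using hk

theorem localSpan_mul_le (k m : ℕ) : localSpan n k * localSpan n m ≤ localSpan n (k + m) := by
  rw [localSpan, localSpan, Submodule.span_mul_span]
  refine Submodule.span_le.mpr ?_
  rintro _ ⟨_, ⟨S, hS, rfl⟩, _, ⟨T, hT, rfl⟩, rfl⟩
  show patternIndicator S * patternIndicator T ∈ _
  rw [patternIndicator_mul]
  exact patternIndicator_mem_localSpan ((Finset.card_union_le S T).trans (by omega))

theorem pow_mem_localSpan {k : ℕ} {f : Perm (Fin n) → ℝ} (hf : f ∈ localSpan n k)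
    (d : ℕ) :
    f ^ d ∈ localSpan n (d * k) := by
  induction d with
  | zero =>
    have h1 : (1 : Perm (Fin n) → ℝ) = patternIndicator ∅ := by
      funext u
      simp [patternIndicator, Extends]
    rw [pow_zero, h1]
    exact patternIndicator_mem_localSpan (by simp)
  | succ d ih =>
    rw [pow_succ, Nat.succ_mul]
    exact localSpan_mul_le _ _ (Submodule.mul_mem_mul ih hf)

theorem reynolds_patternIndicator (S : Finset (Fin n × Fin n)) (w : Perm (Fin n)) :
    reynolds (patternIndicator S) w = (n.factorial : ℝ)⁻¹ * conjCount w S := by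
  simp only [reynolds, patternIndicator, Finset.sum_boole, conjCount]

theorem reynolds_eq_of_mem_localSpan {E : ℕ} {w c : Perm (Fin n)}
    (hwc : ∀ S : Finset (Fin n × Fin n), #S ≤ E → conjCount w S = conjCount c S)
    {f : Perm (Fin n) → ℝ} (hf : f ∈ localSpan n E) : reynolds f w = reynolds f c := by
  induction hf using Submodule.span_induction with
  | mem g hg =>
    obtain ⟨S, hS, rfl⟩ := hg
    rw [reynolds_patternIndicator, reynolds_patternIndicator, hwc S hS]
  | zero => simp [reynolds]
  | add f g _ _ hf hg =>
    simp only [reynolds, Pi.add_apply, Finset.sum_add_distrib, mul_add] at hf hg ⊢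
    rw [hf, hg]
  | smul a f _ hf =>
    simp only [reynolds, Pi.smul_apply, smul_eq_mul, ← Finset.mul_sum] at hf ⊢
    rw [mul_left_comm, hf, mul_left_comm]

theorem noCyclesUpTo_of_numCycLen {w : Perm (Fin n)} {E : ℕ}
    (hw : ∀ i : ℕ, 1 ≤ i → i ≤ E → numCycLen w i = 0) : NoCyclesUpTo w E := by
  intro t j hj hjE hfix
  have hpos : 0 < #{s | w.SameCycle t s} :=
    card_pos.mpr ⟨t, mem_filter.mpr ⟨mem_univ _, .refl _ _⟩⟩
  have hzero := hw _ hpos ((card_sameCycle_le_of_pow_apply_eq_self hj hfix).trans hjE)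
  rw [numCycLen, card_eq_zero, filter_eq_empty_iff] at hzero
  exact hzero (mem_image_of_mem _ (mem_univ t)) rfl

theorem noCyclesUpTo_of_typeOf_eq_singleton {c : Perm (Fin n)} (hc : typeOf c = {n}) {E : ℕ}
    (hE : E < n) : NoCyclesUpTo c E := by
  intro t j hj hjE hfix
  have hmem : #{s | c.SameCycle t s} ∈ typeOf c :=
    Multiset.mem_map_of_mem _ (mem_val.mpr (mem_image_of_mem _ (mem_univ t)))
  rw [hc, Multiset.mem_singleton] at hmem
  have := card_sameCycle_le_of_pow_apply_eq_self hj hfix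
  omega

end Statistics

end PermPattern

/-- Let `f : S_n → ℝ` be `k`-local and `d ≥ 0`.  If the cycle type `λ` of `w` has no cycles
of length `≤ dk` (i.e. `m_1(λ) = ⋯ = m_{dk}(λ) = 0`), then the `d`-th conditional moment of
`f` on `K_λ` equals that on the class of `n`-cycles:
`E(f^d | K_λ) = E(f^d | K_{(n)})`. -/
theorem moment_eq_on_long_cycle_classes {n k d : ℕ} (f : Equiv.Perm (Fin n) → ℝ)
    (hf : IsLocalR n k f) (w c : Equiv.Perm (Fin n))
    (hw : ∀ i : ℕ, 1 ≤ i → i ≤ d * k → numCycLen w i = 0)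
    (hc : typeOf c = {n}) :
    reynolds (fun u => f u ^ d) w = reynolds (fun u => f u ^ d) c := by
  open PermPattern in
  rcases Nat.eq_zero_or_pos n with rfl | hn
  · rw [Subsingleton.elim w c]
  have : Nonempty (Fin n) := ⟨⟨0, hn⟩⟩
  have hw' : NoCyclesUpTo w (d * k) := noCyclesUpTo_of_numCycLen hw
  have hc' : NoCyclesUpTo c (d * k) :=
    noCyclesUpTo_of_typeOf_eq_singleton hc (by simpa using hw'.lt_card)
  exact reynolds_eq_of_mem_localSpan (conjCount_eq_of_noCyclesUpTo hw' hc')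
    (pow_mem_localSpan hf.mem_localSpan d)
end
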